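/- arXiv:1507.04528 — 4 statements merged into one kernel-verified Lean document; each statement's English description precedes it below -/
import Mathlib

section
/- Let ρ: (0,∞)→[0,∞) be measurable with ∫_0^∞ min(1,s) ρ(s) ds < ∞ and ∫_0^∞ ρ(s) ds = +∞, and let κ > 0. Fix an integer k ≥ 1 and positive integers n_1,…,n_k with n = n_1+⋯+n_k. For ε > 0 and u > 0 define f_ε(u) = (u^{n−1}/Γ(n)) · ((k+Λ_{ε,u})/Λ_ε) · exp(Λ_{ε,u} − Λ_ε) · ∏_{i=1}^k κ ∫_ε^∞ s^{n_i} e^{−u s} ρ(s) ds, and define f_0(u) = (u^{n−1}/Γ(n)) · exp( κ ∫_0^∞ (e^{−u s} − 1) ρ(s) ds ) · ∏_{i=1}^k κ ∫_0^∞ s^{n_i} e^{−u s} ρ(s) ds. Then for every u > 0, lim_{ε→0+} f_ε(u) = f_0(u). -/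
/-!
Write `L ε = κ ∫_ε^∞ ρ` and `D ε = κ ∫_ε^∞ (e^{-us} - 1) ρ`, so that `Λ_{ε,u} = L ε + D ε`.
Both `|e^{-us} - 1|` and `s^m e^{-us}` (`m ≥ 1`) are `O(min 1 s)` on `(0, ∞)`, so the
integrability of `min 1 s * ρ s` makes `D ε` and the product integrals converge as `ε → 0⁺`,
while `∫ ρ = ∞` forces `L ε → ∞` by monotone convergence. Hence
`(k + Λ_{ε,u}) / Λ_ε = 1 + (k + D ε) / L ε → 1` and `exp (Λ_{ε,u} - Λ_ε) = exp (D ε) → exp (D 0)`.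
-/

open MeasureTheory Filter Topology Set

section Tails

variable {f : ℝ → ℝ} {a : ℝ}

lemma aecover_restrict_Ioi_nhdsGT (a : ℝ) : AECover (volume.restrict (Ioi a)) (𝓝[>] a) Ioi :=
  aecover_Ioi_of_Ioi (a := id) (tendsto_nhdsWithin_of_tendsto_nhds tendsto_id)

lemma restrict_Ioi_restrict_Ioi_of_lt {ε : ℝ} (hε : a < ε) :
    (volume.restrict (Ioi a)).restrict (Ioi ε) = volume.restrict (Ioi ε) := by
  rw [Measure.restrict_restrict measurableSet_Ioi, Ioi_inter_Ioi, max_eq_left hε.le]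

theorem tendsto_setIntegral_Ioi_nhdsGT (hf : IntegrableOn f (Ioi a)) :
    Tendsto (fun ε => ∫ s in Ioi ε, f s) (𝓝[>] a) (𝓝 (∫ s in Ioi a, f s)) := by
  refine ((aecover_restrict_Ioi_nhdsGT a).integral_tendsto_of_countably_generated hf).congr' ?_
  filter_upwards [self_mem_nhdsWithin] with ε hε
  rw [restrict_Ioi_restrict_Ioi_of_lt hε]

theorem tendsto_setIntegral_Ioi_nhdsGT_atTop (hfm : AEMeasurable f (volume.restrict (Ioi a)))
    (hf_nn : ∀ s ∈ Ioi a, 0 ≤ f s) (hf_int : ∀ ε > a, IntegrableOn f (Ioi ε))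
    (hf_top : ∫⁻ s in Ioi a, ENNReal.ofReal (f s) = ⊤) :
    Tendsto (fun ε => ∫ s in Ioi ε, f s) (𝓝[>] a) atTop := by
  rw [← ENNReal.tendsto_ofReal_nhds_top, ← hf_top]
  refine ((aecover_restrict_Ioi_nhdsGT a).lintegral_tendsto_of_countably_generated
    hfm.ennreal_ofReal).congr' ?_
  filter_upwards [self_mem_nhdsWithin] with ε (hε : a < ε)
  rw [restrict_Ioi_restrict_Ioi_of_lt hε, ofReal_integral_eq_lintegral_ofReal (hf_int ε hε)]
  exact (ae_restrict_iff' measurableSet_Ioi).2 (ae_of_all _ fun s hs => hf_nn s (hε.trans hs))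

end Tails

section MinOneBounds

open Nat

lemma le_max_mul_min_one {x A B s : ℝ} (hs : 0 ≤ s) (hA : x ≤ A * s) (hB : x ≤ B) :
    x ≤ max A B * min 1 s := by
  rcases le_total s 1 with h | h
  · rw [min_eq_right h]
    exact hA.trans (mul_le_mul_of_nonneg_right (le_max_left A B) hs)
  · rw [min_eq_left h, mul_one]
    exact hB.trans (le_max_right A B)

lemma pow_mul_exp_neg_mul_le {u s : ℝ} (hu : 0 < u) (hs : 0 ≤ s) (j : ℕ) :
    s ^ j * Real.exp (-u * s) ≤ j ! / u ^ j := by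
  have h := Real.pow_div_factorial_le_exp (u * s) (mul_nonneg hu.le hs) j
  rw [div_le_iff₀ (by positivity), mul_pow] at h
  rw [le_div_iff₀ (by positivity), neg_mul, Real.exp_neg]
  calc s ^ j * (Real.exp (u * s))⁻¹ * u ^ j = u ^ j * s ^ j * (Real.exp (u * s))⁻¹ := by ring
    _ ≤ Real.exp (u * s) * j ! * (Real.exp (u * s))⁻¹ := by gcongr
    _ = j ! := by field_simp

lemma pow_mul_exp_neg_mul_le_min_one {u s : ℝ} (hu : 0 < u) (hs : 0 ≤ s) {m : ℕ} (hm : 1 ≤ m) :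
    s ^ m * Real.exp (-u * s) ≤ max ((m - 1) ! / u ^ (m - 1)) (m ! / u ^ m) * min 1 s := by
  refine le_max_mul_min_one hs ?_ (pow_mul_exp_neg_mul_le hu hs m)
  calc s ^ m * Real.exp (-u * s) = s ^ (m - 1) * Real.exp (-u * s) * s := by
        rw [mul_right_comm, ← pow_succ, Nat.sub_add_cancel hm]
    _ ≤ (m - 1) ! / u ^ (m - 1) * s := by gcongr; exact pow_mul_exp_neg_mul_le hu hs _

lemma one_sub_exp_neg_mul_le_min_one {u s : ℝ} (hs : 0 ≤ s) :
    1 - Real.exp (-u * s) ≤ max u 1 * min 1 s := by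
  refine le_max_mul_min_one hs ?_ ?_
  · linarith [Real.add_one_le_exp (-u * s)]
  · linarith [Real.exp_pos (-u * s)]

end MinOneBounds

lemma integrableOn_mul_of_abs_le_mul {α : Type*} [MeasurableSpace α] {μ : Measure α} {S : Set α}
    {g w ρ : α → ℝ} (hS : MeasurableSet S) (hwρ : IntegrableOn (fun s => w s * ρ s) S μ)
    (hg : AEStronglyMeasurable g (μ.restrict S)) (hρ : AEStronglyMeasurable ρ (μ.restrict S))
    (hρ_nn : ∀ s ∈ S, 0 ≤ ρ s) (C : ℝ) (hgw : ∀ s ∈ S, |g s| ≤ C * w s) :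
    IntegrableOn (fun s => g s * ρ s) S μ := by
  refine (hwρ.const_mul C).mono' (hg.mul hρ) ((ae_restrict_iff' hS).2 (ae_of_all _ fun s hs => ?_))
  rw [Real.norm_eq_abs, abs_mul, abs_of_nonneg (hρ_nn s hs), ← mul_assoc]
  exact mul_le_mul_of_nonneg_right (hgw s hs) (hρ_nn s hs)

section LevyIntensity

variable {ρ : ℝ → ℝ}

lemma integrableOn_min_one_mul_of_lintegral_lt_top (hρm : Measurable ρ)
    (hρ_nn : ∀ s ∈ Ioi (0 : ℝ), 0 ≤ ρ s)
    (h : ∫⁻ s in Ioi (0 : ℝ), ENNReal.ofReal (min 1 s * ρ s) < ⊤) :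
    IntegrableOn (fun s => min 1 s * ρ s) (Ioi 0) := by
  refine ⟨((measurable_const.min measurable_id).mul hρm).aestronglyMeasurable, ?_⟩
  refine (hasFiniteIntegral_iff_ofReal ?_).2 h
  exact (ae_restrict_iff' measurableSet_Ioi).2 (ae_of_all _ fun s (hs : 0 < s) =>
    mul_nonneg (le_min zero_le_one hs.le) (hρ_nn s hs))

lemma integrableOn_Ioi_of_integrableOn_min_one_mul (hρm : Measurable ρ)
    (hρ_nn : ∀ s ∈ Ioi (0 : ℝ), 0 ≤ ρ s) (hρ : IntegrableOn (fun s => min 1 s * ρ s) (Ioi 0))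
    {ε : ℝ} (hε : 0 < ε) : IntegrableOn ρ (Ioi ε) := by
  have h := integrableOn_mul_of_abs_le_mul (g := fun _ => (1 : ℝ)) measurableSet_Ioi
    (hρ.mono_set (Ioi_subset_Ioi hε.le)) aestronglyMeasurable_const hρm.aestronglyMeasurable
    (fun s hs => hρ_nn s (hε.trans hs)) (min 1 ε)⁻¹ fun s (hs : ε < s) => by
      rw [abs_one, inv_mul_eq_div, one_le_div (lt_min one_pos hε)]
      exact min_le_min_left 1 hs.le
  simpa using h

lemma integrableOn_pow_mul_exp_neg_mul (hρm : Measurable ρ)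
    (hρ_nn : ∀ s ∈ Ioi (0 : ℝ), 0 ≤ ρ s) (hρ : IntegrableOn (fun s => min 1 s * ρ s) (Ioi 0))
    {u : ℝ} (hu : 0 < u) {m : ℕ} (hm : 1 ≤ m) :
    IntegrableOn (fun s => s ^ m * Real.exp (-u * s) * ρ s) (Ioi 0) :=
  integrableOn_mul_of_abs_le_mul measurableSet_Ioi hρ (by fun_prop) hρm.aestronglyMeasurable
    hρ_nn _ fun s (hs : 0 < s) => by
      rw [abs_of_nonneg (by positivity)]
      exact pow_mul_exp_neg_mul_le_min_one hu hs.le hm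

lemma integrableOn_exp_neg_mul_sub_one_mul (hρm : Measurable ρ)
    (hρ_nn : ∀ s ∈ Ioi (0 : ℝ), 0 ≤ ρ s) (hρ : IntegrableOn (fun s => min 1 s * ρ s) (Ioi 0))
    {u : ℝ} (hu : 0 ≤ u) :
    IntegrableOn (fun s => (Real.exp (-u * s) - 1) * ρ s) (Ioi 0) :=
  integrableOn_mul_of_abs_le_mul measurableSet_Ioi hρ (by fun_prop) hρm.aestronglyMeasurable
    hρ_nn _ fun s (hs : 0 < s) => by
      rw [abs_sub_comm, abs_of_nonneg (sub_nonneg.2 (Real.exp_le_one_iff.2 (by nlinarith)))]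
      exact one_sub_exp_neg_mul_le_min_one hs.le

lemma setIntegral_exp_neg_mul_mul_eq_add (hρm : Measurable ρ)
    (hρ_nn : ∀ s ∈ Ioi (0 : ℝ), 0 ≤ ρ s) (hρ : IntegrableOn (fun s => min 1 s * ρ s) (Ioi 0))
    {u : ℝ} (hu : 0 ≤ u) {ε : ℝ} (hε : 0 < ε) :
    ∫ s in Ioi ε, Real.exp (-u * s) * ρ s =
      (∫ s in Ioi ε, ρ s) + ∫ s in Ioi ε, (Real.exp (-u * s) - 1) * ρ s := by
  rw [← integral_add (integrableOn_Ioi_of_integrableOn_min_one_mul hρm hρ_nn hρ hε)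
    ((integrableOn_exp_neg_mul_sub_one_mul hρm hρ_nn hρ hu).mono_set (Ioi_subset_Ioi hε.le))]
  congr 1 with s
  ring

end LevyIntensity

lemma tendsto_const_add_add_div_self {α : Type*} {l : Filter α} {L D : α → ℝ} {d : ℝ} (c : ℝ)
    (hL : Tendsto L l atTop) (hD : Tendsto D l (𝓝 d)) :
    Tendsto (fun x => (c + (L x + D x)) / L x) l (𝓝 1) := by
  have h := tendsto_const_nhds (x := (1 : ℝ)).add
    ((tendsto_const_nhds (x := c).add hD).div_atTop hL)
  rw [add_zero] at h
  refine h.congr' ?_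
  filter_upwards [hL.eventually_ne_atTop 0] with x hx
  field_simp
  ring

theorem eppf_integrand_tendsto_general
    (ρ : ℝ → ℝ) (hρmeas : Measurable ρ) (hρnn : ∀ s ∈ Set.Ioi (0:ℝ), 0 ≤ ρ s)
    (hreg1 : ∫⁻ s in Set.Ioi (0:ℝ), ENNReal.ofReal (min 1 s * ρ s) < ⊤)
    (hreg2 : ∫⁻ s in Set.Ioi (0:ℝ), ENNReal.ofReal (ρ s) = ⊤)
    (κ : ℝ) (hκ : 0 < κ)
    (k : ℕ) (nv : Fin k → ℕ) (hnv : ∀ i, 1 ≤ nv i)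
    (n : ℕ)
    (u : ℝ) (hu : 0 < u) :
    Filter.Tendsto
      (fun ε : ℝ =>
        (u ^ (n - 1) / Real.Gamma n) *
          ((k + κ * ∫ s in Set.Ioi ε, Real.exp (-u * s) * ρ s) /
            (κ * ∫ s in Set.Ioi ε, ρ s)) *
          Real.exp ((κ * ∫ s in Set.Ioi ε, Real.exp (-u * s) * ρ s) -
            (κ * ∫ s in Set.Ioi ε, ρ s)) *
          ∏ i, κ * ∫ s in Set.Ioi ε, s ^ (nv i) * Real.exp (-u * s) * ρ s)
      (𝓝[>] (0:ℝ))
      (𝓝 ((u ^ (n - 1) / Real.Gamma n) *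
        Real.exp (κ * ∫ s in Set.Ioi (0:ℝ), (Real.exp (-u * s) - 1) * ρ s) *
        ∏ i, κ * ∫ s in Set.Ioi (0:ℝ), s ^ (nv i) * Real.exp (-u * s) * ρ s)) := by
  have hρ := integrableOn_min_one_mul_of_lintegral_lt_top hρmeas hρnn hreg1
  have hL : Tendsto (fun ε => κ * ∫ s in Ioi ε, ρ s) (𝓝[>] 0) atTop :=
    (tendsto_setIntegral_Ioi_nhdsGT_atTop hρmeas.aemeasurable hρnn
      (fun _ => integrableOn_Ioi_of_integrableOn_min_one_mul hρmeas hρnn hρ) hreg2).const_mul_atTop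
      hκ
  have hD := (tendsto_setIntegral_Ioi_nhdsGT
    (integrableOn_exp_neg_mul_sub_one_mul hρmeas hρnn hρ hu.le)).const_mul κ
  have hP := tendsto_finsetProd Finset.univ fun i _ =>
    (tendsto_setIntegral_Ioi_nhdsGT
      (integrableOn_pow_mul_exp_neg_mul hρmeas hρnn hρ hu (hnv i))).const_mul κ
  have h := ((tendsto_const_nhds (x := u ^ (n - 1) / Real.Gamma n)).mul
    (tendsto_const_add_add_div_self k hL hD)).mul
    ((Real.continuous_exp.tendsto _).comp hD) |>.mul hP
  rw [mul_one] at h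
  refine h.congr' ?_
  filter_upwards [self_mem_nhdsWithin] with ε (hε : 0 < ε)
  simp only [Function.comp_apply, setIntegral_exp_neg_mul_mul_eq_add hρmeas hρnn hρ hu.le hε,
    mul_add, add_sub_cancel_left]

/-- Pointwise convergence, for every `u > 0`, of the integrand `f_ε(u)`
of the eppf of the ε-approximated normalized CRM to the integrand `f_0(u)` of the eppf
of the limiting normalized CRM, as ε → 0⁺. -/
theorem eppf_integrand_tendsto
    (ρ : ℝ → ℝ) (hρmeas : Measurable ρ) (hρnn : ∀ s ∈ Set.Ioi (0:ℝ), 0 ≤ ρ s)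
    (hreg1 : ∫⁻ s in Set.Ioi (0:ℝ), ENNReal.ofReal (min 1 s * ρ s) < ⊤)
    (hreg2 : ∫⁻ s in Set.Ioi (0:ℝ), ENNReal.ofReal (ρ s) = ⊤)
    (κ : ℝ) (hκ : 0 < κ)
    (k : ℕ) (hk : 1 ≤ k) (nv : Fin k → ℕ) (hnv : ∀ i, 1 ≤ nv i)
    (n : ℕ) (hn : n = ∑ i, nv i)
    (u : ℝ) (hu : 0 < u) :
    Filter.Tendsto
      (fun ε : ℝ =>
        (u ^ (n - 1) / Real.Gamma n) *
          ((k + κ * ∫ s in Set.Ioi ε, Real.exp (-u * s) * ρ s) /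
            (κ * ∫ s in Set.Ioi ε, ρ s)) *
          Real.exp ((κ * ∫ s in Set.Ioi ε, Real.exp (-u * s) * ρ s) -
            (κ * ∫ s in Set.Ioi ε, ρ s)) *
          ∏ i, κ * ∫ s in Set.Ioi ε, s ^ (nv i) * Real.exp (-u * s) * ρ s)
      (𝓝[>] (0:ℝ))
      (𝓝 ((u ^ (n - 1) / Real.Gamma n) *
        Real.exp (κ * ∫ s in Set.Ioi (0:ℝ), (Real.exp (-u * s) - 1) * ρ s) *
        ∏ i, κ * ∫ s in Set.Ioi (0:ℝ), s ^ (nv i) * Real.exp (-u * s) * ρ s)) :=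
  eppf_integrand_tendsto_general ρ hρmeas hρnn hreg1 hreg2 κ hκ k nv hnv n u hu
end

section
/- Let ω ≥ 1 and define ρ_B(s) = s^{−1} e^{−ω s} I_0(s) for s > 0, where I_0(s) = Σ_{m=0}^∞ (s/2)^{2m}/(m!)^2. Then ρ_B satisfies the regularity conditions for a normalized completely random measure: ∫_0^∞ min(1,s) ρ_B(s) ds < ∞ and ∫_0^∞ ρ_B(s) ds = +∞. -/
/-!
Near the origin `I₀ ≥ 1` and `e^{-ωs} ≥ e^{-ω}`, so `ρ_B(s) ≥ e^{-ω} / s` on `(0, 1]`, which is not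
integrable at `0`.

For the finiteness, `I₀(s) ≤ eˢ` is too weak when `ω = 1`; instead expand `I₀` termwise. Since
`e^{-ωs} ≤ e^{-s}` and `min(1,s)/s · s^{2m} ≤ s^{2m-1}`, the `m`-th term of `min(1,s) ρ_B` integrates
to at most `(2m-1)! / (4^m (m!)²)` by the Gamma integral. With `a_m = (2m)! / (4^m (m!)²) = C(2m,m) / 4^m`
one has `a_{m+1} = a_m (2m+1)/(2m+2)`, and the `(m+1)`-st bound is at most `a_m - a_{m+1}`, so the
series telescopes and is bounded by `a_0 + 1 = 2`.
-/

open MeasureTheory Set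

noncomputable def besselI0 (s : ℝ) : ℝ :=
  ∑' m : ℕ, (s / 2) ^ (2 * m) / ((Nat.factorial m : ℝ)) ^ 2

open Real Finset
open scoped ENNReal Nat

noncomputable def besselIntensity (ω s : ℝ) : ℝ :=
  s⁻¹ * Real.exp (-ω * s) * besselI0 s

lemma besselI0_term_nonneg (s : ℝ) (m : ℕ) : 0 ≤ (s / 2) ^ (2 * m) / (m ! : ℝ) ^ 2 :=
  div_nonneg ((even_two_mul m).pow_nonneg _) (by positivity)

lemma summable_besselI0_term (s : ℝ) :
    Summable fun m : ℕ => (s / 2) ^ (2 * m) / (m ! : ℝ) ^ 2 := by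
  refine (summable_pow_div_factorial ((s / 2) ^ 2)).of_nonneg_of_le (besselI0_term_nonneg s)
    fun m => ?_
  rw [pow_mul]
  have h : (1 : ℝ) ≤ m ! := mod_cast m.factorial_pos
  exact div_le_div_of_nonneg_left (by positivity) (by positivity) (by nlinarith)

lemma one_le_besselI0 (s : ℝ) : 1 ≤ besselI0 s := by
  simpa [besselI0] using (summable_besselI0_term s).le_tsum 0 fun m _ => besselI0_term_nonneg s m

-- `n - 1` is truncated: for `n = 0` this reads `min 1 s / s ≤ 1`.
lemma min_one_mul_inv_mul_pow_le {s : ℝ} (hs : 0 < s) (n : ℕ) :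
    min 1 s * s⁻¹ * s ^ n ≤ s ^ (n - 1) := by
  cases n with
  | zero =>
    calc min 1 s * s⁻¹ * s ^ 0 ≤ s * s⁻¹ := by
          rw [pow_zero, mul_one]; gcongr; exact min_le_right _ _
      _ = 1 := mul_inv_cancel₀ hs.ne'
  | succ k =>
    calc min 1 s * s⁻¹ * s ^ (k + 1) = min 1 s * s ^ k := by
          rw [pow_succ']; field_simp
      _ ≤ s ^ k := mul_le_of_le_one_left (by positivity) (min_le_left _ _)

lemma lintegral_exp_neg_mul_pow (n : ℕ) :
    ∫⁻ s in Ioi (0 : ℝ), ENNReal.ofReal (exp (-s) * s ^ n) = ENNReal.ofReal n ! := by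
  have hGamma := Real.Gamma_eq_integral (s := n + 1) (by positivity)
  simp only [Real.Gamma_nat_eq_factorial, add_sub_cancel_right, Real.rpow_natCast] at hGamma
  have hint : IntegrableOn (fun s : ℝ => exp (-s) * s ^ n) (Ioi 0) := by
    simpa only [add_sub_cancel_right, Real.rpow_natCast] using
      Real.GammaIntegral_convergent (s := n + 1) (by positivity)
  rw [hGamma, ofReal_integral_eq_lintegral_ofReal hint]
  filter_upwards [ae_restrict_mem measurableSet_Ioi] with s hs
  exact mul_nonneg (exp_nonneg _) (pow_nonneg (le_of_lt hs) _)

lemma factorial_two_mul_add_one_div_le (m : ℕ) :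
    ((2 * m + 1)! : ℝ) / (4 ^ (m + 1) * ((m + 1)! : ℝ) ^ 2) ≤
      (2 * m)! / (4 ^ m * (m ! : ℝ) ^ 2) - (2 * (m + 1))! / (4 ^ (m + 1) * ((m + 1)! : ℝ) ^ 2) := by
  have hgap : (2 * m)! / (4 ^ m * (m ! : ℝ) ^ 2)
      - (2 * (m + 1))! / (4 ^ (m + 1) * ((m + 1)! : ℝ) ^ 2)
      - (2 * m + 1)! / (4 ^ (m + 1) * ((m + 1)! : ℝ) ^ 2)
      = (2 * m)! / (4 ^ (m + 1) * ((m + 1)! : ℝ) ^ 2) := by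
    rw [show 2 * (m + 1) = 2 * m + 1 + 1 by ring]
    push_cast [Nat.factorial_succ]
    field_simp
    ring
  linarith [hgap ▸ (by positivity : (0 : ℝ) ≤ (2 * m)! / (4 ^ (m + 1) * ((m + 1)! : ℝ) ^ 2))]

lemma summable_factorial_two_mul_sub_one_div :
    Summable fun m : ℕ => ((2 * m - 1)! : ℝ) / (4 ^ m * (m ! : ℝ) ^ 2) := by
  rw [← summable_nat_add_iff 1]
  refine summable_of_sum_range_le (c := 1) (fun m => by positivity) fun n => ?_
  set a : ℕ → ℝ := fun m => (2 * m)! / (4 ^ m * (m ! : ℝ) ^ 2)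
  calc ∑ m ∈ range n, ((2 * (m + 1) - 1)! : ℝ) / (4 ^ (m + 1) * ((m + 1)! : ℝ) ^ 2)
      ≤ ∑ m ∈ range n, (a m - a (m + 1)) := sum_le_sum fun m _ => by
        simpa [show 2 * (m + 1) - 1 = 2 * m + 1 by omega] using
          factorial_two_mul_add_one_div_le m
    _ = a 0 - a n := sum_range_sub' a n
    _ ≤ 1 := by simp [a]; positivity

lemma min_one_mul_besselIntensity_le {ω : ℝ} (hω : 1 ≤ ω) {s : ℝ} (hs : 0 < s) :
    ENNReal.ofReal (min 1 s * besselIntensity ω s) ≤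
      ∑' m : ℕ, ENNReal.ofReal ((4 ^ m * (m ! : ℝ) ^ 2)⁻¹) *
        ENNReal.ofReal (exp (-s) * s ^ (2 * m - 1)) := by
  have hseries : min 1 s * besselIntensity ω s =
      ∑' m : ℕ, min 1 s * (s⁻¹ * exp (-ω * s)) * ((s / 2) ^ (2 * m) / (m ! : ℝ) ^ 2) := by
    rw [tsum_mul_left, besselIntensity, besselI0]; ring
  have hexp : exp (-ω * s) ≤ exp (-s) := exp_le_exp.2 (by nlinarith)
  rw [hseries, ENNReal.ofReal_tsum_of_nonneg (fun m => by positivity [besselI0_term_nonneg s m])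
    ((summable_besselI0_term s).mul_left _)]
  refine ENNReal.tsum_le_tsum fun m => ?_
  rw [← ENNReal.ofReal_mul (by positivity)]
  refine ENNReal.ofReal_le_ofReal ?_
  calc min 1 s * (s⁻¹ * exp (-ω * s)) * ((s / 2) ^ (2 * m) / (m ! : ℝ) ^ 2)
      = (4 ^ m * (m ! : ℝ) ^ 2)⁻¹ * exp (-ω * s) * (min 1 s * s⁻¹ * s ^ (2 * m)) := by
        rw [div_pow, pow_mul 2, show (2 : ℝ) ^ 2 = 4 by norm_num]; ring
    _ ≤ (4 ^ m * (m ! : ℝ) ^ 2)⁻¹ * exp (-s) * s ^ (2 * m - 1) := by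
        gcongr
        exact min_one_mul_inv_mul_pow_le hs _
    _ = _ := by ring

lemma lintegral_min_one_mul_besselIntensity_lt_top {ω : ℝ} (hω : 1 ≤ ω) :
    ∫⁻ s in Ioi (0 : ℝ), ENNReal.ofReal (min 1 s * besselIntensity ω s) < ⊤ :=
  calc ∫⁻ s in Ioi (0 : ℝ), ENNReal.ofReal (min 1 s * besselIntensity ω s)
      ≤ ∫⁻ s in Ioi (0 : ℝ), ∑' m : ℕ, ENNReal.ofReal ((4 ^ m * (m ! : ℝ) ^ 2)⁻¹) *
          ENNReal.ofReal (exp (-s) * s ^ (2 * m - 1)) :=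
        setLIntegral_mono' measurableSet_Ioi fun _ hs => min_one_mul_besselIntensity_le hω hs
    _ = ∑' m : ℕ, ENNReal.ofReal ((4 ^ m * (m ! : ℝ) ^ 2)⁻¹) *
          ∫⁻ s in Ioi (0 : ℝ), ENNReal.ofReal (exp (-s) * s ^ (2 * m - 1)) := by
        rw [lintegral_tsum fun m => by fun_prop]
        simp_rw [lintegral_const_mul' _ _ ENNReal.ofReal_ne_top]
    _ = ENNReal.ofReal (∑' m : ℕ, ((2 * m - 1)! : ℝ) / (4 ^ m * (m ! : ℝ) ^ 2)) := by
        rw [ENNReal.ofReal_tsum_of_nonneg (fun _ => by positivity)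
          summable_factorial_two_mul_sub_one_div]
        refine tsum_congr fun m => ?_
        rw [lintegral_exp_neg_mul_pow, ← ENNReal.ofReal_mul (by positivity), inv_mul_eq_div]
    _ < ⊤ := ENNReal.ofReal_lt_top

lemma lintegral_Ioc_zero_one_inv_eq_top : ∫⁻ s in Ioc (0 : ℝ) 1, ENNReal.ofReal s⁻¹ = ⊤ := by
  by_contra h
  have hint := (lintegral_ofReal_ne_top_iff_integrable measurable_inv.aestronglyMeasurable
    ((ae_restrict_mem measurableSet_Ioc).mono fun s hs => inv_nonneg.2 hs.1.le)).1 h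
  simpa using (intervalIntegrable_iff_integrableOn_Ioc_of_le zero_le_one).2 hint

lemma lintegral_besselIntensity_eq_top {ω : ℝ} (hω : 0 ≤ ω) :
    ∫⁻ s in Ioi (0 : ℝ), ENNReal.ofReal (besselIntensity ω s) = ⊤ := by
  have hbound : ∀ s ∈ Ioc (0 : ℝ) 1, exp (-ω) * s⁻¹ ≤ besselIntensity ω s := by
    rintro s ⟨hs0, hs1⟩
    have hexp : exp (-ω) ≤ exp (-ω * s) := exp_le_exp.2 (by nlinarith)
    calc exp (-ω) * s⁻¹ ≤ s⁻¹ * exp (-ω * s) * 1 := by rw [mul_one, mul_comm]; gcongr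
      _ ≤ besselIntensity ω s := by unfold besselIntensity; gcongr; exact one_le_besselI0 s
  refine eq_top_iff.2 ?_
  calc ∞ = ENNReal.ofReal (exp (-ω)) * ∫⁻ s in Ioc (0 : ℝ) 1, ENNReal.ofReal s⁻¹ := by
        rw [lintegral_Ioc_zero_one_inv_eq_top, ENNReal.mul_top (by simpa using exp_pos (-ω))]
    _ = ∫⁻ s in Ioc (0 : ℝ) 1, ENNReal.ofReal (exp (-ω) * s⁻¹) := by
        rw [← lintegral_const_mul' _ _ ENNReal.ofReal_ne_top]
        simp_rw [ENNReal.ofReal_mul (exp_nonneg _)]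
    _ ≤ ∫⁻ s in Ioc (0 : ℝ) 1, ENNReal.ofReal (besselIntensity ω s) :=
        setLIntegral_mono' measurableSet_Ioc fun s hs => ENNReal.ofReal_le_ofReal (hbound s hs)
    _ ≤ ∫⁻ s in Ioi (0 : ℝ), ENNReal.ofReal (besselIntensity ω s) :=
        lintegral_mono_set Ioc_subset_Ioi_self

/-- For `ω ≥ 1` the Bessel intensity `ρ_B(s) = s⁻¹ e^{-ωs} I₀(s)` satisfies
the regularity conditions for a normalized completely random measure:
`∫₀^∞ min(1,s) ρ_B(s) ds < ∞` and `∫₀^∞ ρ_B(s) ds = +∞`. -/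
theorem besselIntensity_regularity (ω : ℝ) (hω : 1 ≤ ω) :
    (∫⁻ s in Set.Ioi (0:ℝ),
        ENNReal.ofReal (min 1 s * (s⁻¹ * Real.exp (-ω * s) * besselI0 s)) < ⊤) ∧
    (∫⁻ s in Set.Ioi (0:ℝ),
        ENNReal.ofReal (s⁻¹ * Real.exp (-ω * s) * besselI0 s) = ⊤) :=
  ⟨lintegral_min_one_mul_besselIntensity_lt_top hω,
    lintegral_besselIntensity_eq_top (zero_le_one.trans hω)⟩
end

section
/- Let a > 1 be real and n ≥ 1 an integer. Then ∫_0^∞ s^{n−1} e^{−a s} I_0(s) ds = Γ(n) a^{−n} · Σ_{m=0}^∞ [ (n/2)_m ((n+1)/2)_m / ((1)_m m!) ] a^{−2m}, where I_0(s) = Σ_{m=0}^∞ (s/2)^{2m}/(m!)^2, (x)_m := Γ(x+m)/Γ(x) is the Pochhammer symbol, and the series on the right is the Gauss hypergeometric series ₂F₁(n/2, (n+1)/2; 1; 1/a^2). -/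
/-!
Expand `I₀` and integrate term by term, for any real exponent `x > 0` in place of `n`. The Gamma
integral gives
`∫₀^∞ s^{x-1} e^{-as} (s/2)^{2m} / (m!)² ds = Γ(x + 2m) / (4^m (m!)² a^{x+2m})`, and writing
`Γ(x + 2m) = Γ(x) (x)_{2m}` with the splitting `(x)_{2m} = 4^m (x/2)_m ((x+1)/2)_m` of a rising
factorial of even length makes this `Γ(x) a^{-x}` times the `m`-th term of
`₂F₁(x/2, (x+1)/2; 1; 1/a²)`. Since the terms are nonnegative and `|1/a²| < 1` lies inside the
radius of convergence `1` of that series, the sum of the integrals converges absolutely, which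
justifies the interchange.
-/

open MeasureTheory Set

/-- The Pochhammer symbol `(x)_m = Γ(x + m) / Γ(x)`. -/
noncomputable def poch (x : ℝ) (m : ℕ) : ℝ := Real.Gamma (x + m) / Real.Gamma x

/-- The Gauss hypergeometric series `₂F₁(a, b; 1; z) = Σ_m (a)_m (b)_m / ((1)_m m!) z^m`. -/
noncomputable def hyp2F1one (a b z : ℝ) : ℝ :=
  ∑' m : ℕ, (poch a m * poch b m / (poch 1 m * (Nat.factorial m : ℝ))) * z ^ m

open Real

theorem ne_neg_natCast_of_pos {y : ℝ} (hy : 0 < y) (k : ℕ) : y ≠ -k := by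
  have : (0 : ℝ) ≤ k := k.cast_nonneg
  linarith

theorem poch_eq_ascPochhammer_eval {x : ℝ} (hx : ∀ k : ℕ, x ≠ -k) (m : ℕ) :
    poch x m = (ascPochhammer ℝ m).eval x := by
  induction m with
  | zero => simp [poch, div_self (Gamma_ne_zero hx)]
  | succ m ih =>
    have hxm : x + m ≠ 0 := fun h => hx m (eq_neg_of_add_eq_zero_left h)
    rw [ascPochhammer_succ_eval, ← ih, poch, poch, Nat.cast_succ, ← add_assoc,
      Gamma_add_one hxm]
    ring

theorem poch_pos {x : ℝ} (hx : 0 < x) (m : ℕ) : 0 < poch x m :=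
  div_pos (Gamma_pos_of_pos (by positivity)) (Gamma_pos_of_pos hx)

theorem poch_one (m : ℕ) : poch 1 m = m.factorial := by
  rw [poch_eq_ascPochhammer_eval (ne_neg_natCast_of_pos one_pos), ascPochhammer_eval_one]

theorem ascPochhammer_eval_two_mul {K : Type*} [Field K] [NeZero (2 : K)] (x : K) (m : ℕ) :
    (ascPochhammer K (2 * m)).eval x =
      4 ^ m * (ascPochhammer K m).eval (x / 2) * (ascPochhammer K m).eval ((x + 1) / 2) := by
  induction m with
  | zero => simp
  | succ m ih =>
    rw [show 2 * (m + 1) = 2 * m + 1 + 1 by ring, ascPochhammer_succ_eval,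
      ascPochhammer_succ_eval, ih, ascPochhammer_succ_eval, ascPochhammer_succ_eval]
    push_cast
    field_simp
    ring

theorem Gamma_add_two_mul_eq_mul_poch {x : ℝ} (hx : 0 < x) (m : ℕ) :
    Gamma (x + 2 * m) = Gamma x * 4 ^ m * poch (x / 2) m * poch ((x + 1) / 2) m := by
  have hpoch : Gamma (x + (2 * m : ℕ)) = Gamma x * poch x (2 * m) := by
    rw [poch, mul_div_cancel₀ _ (Gamma_pos_of_pos hx).ne']
  rw [show (2 : ℝ) * m = ((2 * m : ℕ) : ℝ) by push_cast; ring, hpoch,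
    poch_eq_ascPochhammer_eval (ne_neg_natCast_of_pos hx), ascPochhammer_eval_two_mul,
    poch_eq_ascPochhammer_eval (ne_neg_natCast_of_pos (by positivity)),
    poch_eq_ascPochhammer_eval (ne_neg_natCast_of_pos (by positivity))]
  ring

theorem summable_hyp2F1one_term {α β z : ℝ} (hα : ∀ k : ℕ, α ≠ -k) (hβ : ∀ k : ℕ, β ≠ -k)
    (hz : |z| < 1) :
    Summable fun m : ℕ => poch α m * poch β m / (poch 1 m * m.factorial) * z ^ m := by
  have hradius := ordinaryHypergeometricSeries_radius_eq_one ℝ α β 1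
    fun k => ⟨fun h => hα k (by rw [h, neg_neg]), fun h => hβ k (by rw [h, neg_neg]),
      (neg_one_lt_zero.trans_le k.cast_nonneg).ne'⟩
  have hz' : z ∈ Metric.eball (0 : ℝ) (ordinaryHypergeometricSeries ℝ α β 1).radius := by
    rw [hradius, mem_eball_zero_iff, ← ofReal_norm, ENNReal.ofReal_lt_one]
    simpa using hz
  refine ((ordinaryHypergeometricSeries ℝ α β 1).summable hz').congr fun m => ?_
  rw [ordinaryHypergeometricSeries_apply_eq, poch_eq_ascPochhammer_eval hα,
    poch_eq_ascPochhammer_eval hβ, poch_one, ascPochhammer_eval_one, smul_eq_mul]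
  field_simp

theorem integral_rpow_mul_exp_neg_mul_mul_besselI0_term {x a : ℝ} (hx : 0 < x) (ha : 0 < a)
    (m : ℕ) :
    ∫ s in Ioi 0, s ^ (x - 1) * exp (-a * s) * ((s / 2) ^ (2 * m) / (m.factorial : ℝ) ^ 2) =
      Gamma x / a ^ x *
        (poch (x / 2) m * poch ((x + 1) / 2) m / (poch 1 m * m.factorial) * (1 / a ^ 2) ^ m) := by
  set C : ℝ := (4 ^ m * (m.factorial : ℝ) ^ 2)⁻¹
  have hterm : ∀ s ∈ Ioi (0 : ℝ), s ^ (x - 1) * exp (-a * s) *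
      ((s / 2) ^ (2 * m) / (m.factorial : ℝ) ^ 2) =
        C * (s ^ (x + 2 * m - 1) * exp (-(a * s))) := by
    intro s hs
    rw [show x + 2 * m - 1 = (x - 1) + (2 * m : ℕ) by push_cast; ring,
      rpow_add hs, rpow_natCast, div_pow, pow_mul, pow_mul]
    simp only [C]
    field_simp
    norm_num
  have hxm : 0 < x + 2 * m := by positivity
  rw [setIntegral_congr_fun measurableSet_Ioi hterm, integral_const_mul,
    integral_rpow_mul_exp_neg_mul_Ioi hxm ha, Gamma_add_two_mul_eq_mul_poch hx,
    show (2 : ℝ) * m = ((2 * m : ℕ) : ℝ) by push_cast; ring, rpow_add_natCast (by positivity),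
    div_rpow zero_le_one ha.le, one_rpow, poch_one]
  simp only [C]
  field_simp
  rw [pow_mul, div_pow, one_pow]
  ring

theorem integral_rpow_mul_exp_neg_mul_mul_besselI0 {x a : ℝ} (hx : 0 < x) (ha : 1 < a) :
    ∫ s in Ioi 0, s ^ (x - 1) * exp (-a * s) * besselI0 s =
      Gamma x / a ^ x * hyp2F1one (x / 2) ((x + 1) / 2) (1 / a ^ 2) := by
  have ha0 : 0 < a := one_pos.trans ha
  set F : ℕ → ℝ → ℝ := fun m s =>
    s ^ (x - 1) * exp (-a * s) * ((s / 2) ^ (2 * m) / (m.factorial : ℝ) ^ 2)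
  have hF_integral : ∀ m, ∫ s in Ioi 0, F m s = Gamma x / a ^ x *
      (poch (x / 2) m * poch ((x + 1) / 2) m / (poch 1 m * m.factorial) * (1 / a ^ 2) ^ m) :=
    integral_rpow_mul_exp_neg_mul_mul_besselI0_term hx ha0
  have hF_int : ∀ m, IntegrableOn (F m) (Ioi 0) := fun m => by
    refine Integrable.of_integral_ne_zero (ne_of_gt ?_)
    rw [hF_integral, poch_one]
    have := poch_pos (half_pos hx) m
    have := poch_pos (by positivity : 0 < (x + 1) / 2) m
    positivity
  have hF_norm : ∀ m, ∫ s in Ioi 0, ‖F m s‖ = ∫ s in Ioi 0, F m s := fun m =>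
    setIntegral_congr_fun measurableSet_Ioi fun s (hs : 0 < s) =>
      Real.norm_of_nonneg (by positivity)
  have hz : |1 / a ^ 2| < 1 := by
    rw [abs_of_pos (by positivity), div_lt_one (by positivity)]
    exact one_lt_pow₀ ha two_ne_zero
  have hF_sum : Summable fun m => ∫ s in Ioi 0, ‖F m s‖ := by
    simp only [hF_norm, hF_integral]
    exact (summable_hyp2F1one_term (ne_neg_natCast_of_pos (half_pos hx))
      (ne_neg_natCast_of_pos (by positivity : 0 < (x + 1) / 2)) hz).mul_left _
  calc ∫ s in Ioi 0, s ^ (x - 1) * exp (-a * s) * besselI0 s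
      = ∫ s in Ioi 0, ∑' m, F m s := by simp only [F, besselI0, tsum_mul_left]
    _ = ∑' m, ∫ s in Ioi 0, F m s :=
      (integral_tsum_of_summable_integral_norm hF_int hF_sum).symm
    _ = Gamma x / a ^ x * hyp2F1one (x / 2) ((x + 1) / 2) (1 / a ^ 2) := by
      simp only [hF_integral, hyp2F1one, tsum_mul_left]

/-- For real `a > 1` and integer `n ≥ 1`,
`∫₀^∞ s^{n-1} e^{-as} I₀(s) ds = Γ(n) a^{-n} ₂F₁(n/2, (n+1)/2; 1; 1/a²)`. -/
theorem integral_bessel_moment (a : ℝ) (ha : 1 < a) (n : ℕ) (hn : 1 ≤ n) :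
    ∫ s in Set.Ioi (0:ℝ), s ^ (n - 1) * Real.exp (-a * s) * besselI0 s
      = Real.Gamma n / a ^ n *
          hyp2F1one ((n : ℝ) / 2) (((n : ℝ) + 1) / 2) (1 / a ^ 2) := by
  have hn' : (0 : ℝ) < n := by exact_mod_cast hn
  rw [← rpow_natCast a, ← integral_rpow_mul_exp_neg_mul_mul_besselI0 hn' ha]
  refine setIntegral_congr_fun measurableSet_Ioi fun s _ => ?_
  rw [← rpow_natCast, Nat.cast_sub hn, Nat.cast_one]
end

section
/- Let ω ≥ 1 and u ≥ 0. Then (ω/(u+ω)) · (1 + √(1 − 1/ω^2))/2 ≤ (ω + √(ω^2 − 1)) / ( (u+ω) + √((u+ω)^2 − 1) ) ≤ ω/(u+ω). -/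
lemma sqrt_sub_one_eq (a : ℝ) (ha : 1 ≤ a) :
    Real.sqrt (a ^ 2 - 1) = a * Real.sqrt (1 - 1 / a ^ 2) := by
  have hap : 0 < a := by linarith
  have h : a ^ 2 - 1 = a ^ 2 * (1 - 1 / a ^ 2) := by field_simp
  rw [h, Real.sqrt_mul (by positivity), Real.sqrt_sq hap.le]

/-- For `ω ≥ 1` and `u ≥ 0`,
`(ω/(u+ω)) (1 + √(1 - 1/ω²))/2 ≤ (ω + √(ω² - 1)) / ((u+ω) + √((u+ω)² - 1)) ≤ ω/(u+ω)`. -/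
theorem bessel_ratio_bounds (ω u : ℝ) (hω : 1 ≤ ω) (hu : 0 ≤ u) :
    (ω / (u + ω)) * ((1 + Real.sqrt (1 - 1 / ω ^ 2)) / 2)
        ≤ (ω + Real.sqrt (ω ^ 2 - 1)) / ((u + ω) + Real.sqrt ((u + ω) ^ 2 - 1)) ∧
    (ω + Real.sqrt (ω ^ 2 - 1)) / ((u + ω) + Real.sqrt ((u + ω) ^ 2 - 1))
        ≤ ω / (u + ω) := by
  have hb : (1 : ℝ) ≤ u + ω := by linarith
  have hωp : (0 : ℝ) < ω := by linarith
  have hbp : (0 : ℝ) < u + ω := by linarith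
  set sa := Real.sqrt (1 - 1 / ω ^ 2) with hsa
  set sb := Real.sqrt (1 - 1 / (u + ω) ^ 2) with hsb
  have hsa0 : 0 ≤ sa := Real.sqrt_nonneg _
  have hsb0 : 0 ≤ sb := Real.sqrt_nonneg _
  have hsa1 : sa ≤ 1 := by
    have : 0 < 1 / ω ^ 2 := by positivity
    calc sa ≤ Real.sqrt 1 := Real.sqrt_le_sqrt (by linarith)
    _ = 1 := Real.sqrt_one
  have hsb1 : sb ≤ 1 := by
    have : 0 < 1 / (u + ω) ^ 2 := by positivity
    calc sb ≤ Real.sqrt 1 := Real.sqrt_le_sqrt (by linarith)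
    _ = 1 := Real.sqrt_one
  have hsab : sa ≤ sb := by
    apply Real.sqrt_le_sqrt
    have h1 : 1 / (u + ω) ^ 2 ≤ 1 / ω ^ 2 := by
      apply one_div_le_one_div_of_le (by positivity)
      nlinarith
    linarith
  rw [sqrt_sub_one_eq ω hω, sqrt_sub_one_eq (u + ω) hb, ← hsa, ← hsb]
  have hden : 0 < (u + ω) + (u + ω) * sb := by positivity
  constructor
  · rw [div_mul_eq_mul_div, div_le_div_iff₀ hbp hden]
    nlinarith [mul_nonneg (mul_nonneg (mul_nonneg hωp.le hbp.le) hsa0) (sub_nonneg.2 hsb1),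
      mul_nonneg (mul_nonneg hωp.le hbp.le) (sub_nonneg.2 hsb1)]
  · rw [div_le_div_iff₀ hden hbp]
    nlinarith [mul_nonneg (mul_nonneg hωp.le hbp.le) (sub_nonneg.2 hsab)]
end
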